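/- arXiv:1503.02607 — 3 statements merged into one kernel-verified Lean document; each statement's English description precedes it below -/
import Mathlib

section
/- Let R be a commutative Noetherian ring, I an ideal, and W₁,…,Wᵣ ideals containing I. If for every prime p associated to I the induced map on p-socles soc_p(I) → R_p/(W₁)_p ⊕ ⋯ ⊕ R_p/(Wᵣ)_p is injective, then I = W₁ ∩ ⋯ ∩ Wᵣ, where soc_p(I) = {f ∈ R_p/I_p : p·f = 0}. -/
/-!
If `I < ⋂ Wᵢ`, the nonzero module `(⋂ Wᵢ)/I ⊆ R/I` has an associated prime `p = (I : x)` with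
`x ∈ ⋂ Wᵢ`. The class of `x` in `R_p/I_p` is then killed by `p`, i.e. lies in the `p`-socle, and
vanishes in every `R_p/(Wᵢ)_p`; injectivity forces it to vanish in `R_p/I_p`, so `s x ∈ I` for
some `s ∉ p`, contradicting `(I : x) = p`.
-/

theorem Ideal.exists_mem_associatedPrimes_forall_mem_iff_of_not_le {R : Type*} [CommRing R]
    [IsNoetherianRing R] {I J : Ideal R} (h : ¬J ≤ I) :
    ∃ p ∈ associatedPrimes R (R ⧸ I), ∃ x ∈ J, ∀ a, a ∈ p ↔ a * x ∈ I := by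
  obtain ⟨x₀, hx₀J, hx₀I⟩ := SetLike.not_le_iff_exists.mp h
  let N : Submodule R (R ⧸ I) := Submodule.map I.mkQ J
  have : Nontrivial N := ⟨⟨⟨I.mkQ x₀, Submodule.mem_map_of_mem hx₀J⟩, 0, fun h ↦
    hx₀I (Ideal.Quotient.eq_zero_iff_mem.mp (congrArg Subtype.val h))⟩⟩
  obtain ⟨p, hp⟩ := associatedPrimes.nonempty R N
  obtain ⟨-, y, rfl⟩ := isAssociatedPrime_iff.mp hp
  obtain ⟨x, hxJ, hxy⟩ := y.2
  refine ⟨_, hp.map_of_injective N.subtype N.injective_subtype, x, hxJ, fun a ↦ ?_⟩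
  rw [Submodule.mem_colon_singleton, Submodule.mem_bot R, ← Subtype.val_inj, N.coe_smul, ← hxy,
    ← map_smul, smul_eq_mul, ZeroMemClass.coe_zero, Submodule.mkQ_apply, Ideal.Quotient.mk_eq_mk,
    Ideal.Quotient.eq_zero_iff_mem]

theorem IsLocalization.AtPrime.algebraMap_notMem_map_of_forall_mem {R S : Type*} [CommRing R]
    [CommRing S] [Algebra R S] (p : Ideal R) [p.IsPrime] [IsLocalization.AtPrime S p]
    {I : Ideal R} {x : R} (hx : ∀ a, a * x ∈ I → a ∈ p) :
    algebraMap R S x ∉ I.map (algebraMap R S) := by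
  rw [IsLocalization.algebraMap_mem_map_algebraMap_iff p.primeCompl]
  rintro ⟨s, hs, hsx⟩
  exact hs (hx s hsx)

theorem stmt8 (R : Type*) [CommRing R] [IsNoetherianRing R]
    (I : Ideal R) (r : ℕ) (W : Fin r → Ideal R) (hW : ∀ i, I ≤ W i)
    (hsoc : ∀ p : Ideal R, p ∈ associatedPrimes R (R ⧸ I) → ∀ (hp : p.IsPrime),
      letI Rp := Localization.AtPrime p
      letI Ip := I.map (algebraMap R Rp)
      Set.InjOn
        (fun f : Rp ⧸ Ip => fun i : Fin r =>
          Ideal.Quotient.factor (S := Ip) (T := (W i).map (algebraMap R Rp))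
            (Ideal.map_mono (hW i)) f)
        {f : Rp ⧸ Ip | ∀ a ∈ p, Ideal.Quotient.mk Ip (algebraMap R Rp a) * f = 0}) :
    I = ⨅ i, W i := by
  refine le_antisymm (le_iInf hW) ?_
  by_contra hle
  obtain ⟨p, hp, x, hxW, hann⟩ := Ideal.exists_mem_associatedPrimes_forall_mem_iff_of_not_le hle
  have := hp.isPrime
  let Rp := Localization.AtPrime p
  let Ip := I.map (algebraMap R Rp)
  have hx0 : Ideal.Quotient.mk Ip (algebraMap R Rp x) = 0 := by
    refine hsoc p hp this (fun a ha ↦ ?_) (fun _ _ ↦ mul_zero _) (funext fun i ↦ ?_)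
    · rw [← map_mul, ← map_mul, Ideal.Quotient.eq_zero_iff_mem]
      exact Ideal.mem_map_of_mem _ ((hann a).mp ha)
    · dsimp only
      rw [map_zero, Ideal.Quotient.factor_mk, Ideal.Quotient.eq_zero_iff_mem]
      exact Ideal.mem_map_of_mem _ (Ideal.mem_iInf.mp hxW i)
  exact IsLocalization.AtPrime.algebraMap_notMem_map_of_forall_mem p (fun a ↦ (hann a).mpr)
    (Ideal.Quotient.eq_zero_iff_mem.mp hx0)
end

section
/- Let k be a field and I = ⟨x²y − xy², x³, y³⟩ ⊂ k[x,y]. There is no expression I = I₁ ∩ I₂ with both I₁ and I₂ irreducible ideals generated by binomials (elements of the form λx^a y^b − μx^c y^d with λ, μ ∈ k). -/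
open MvPolynomial

/-- A binomial in k[x,y]: an element of the form λ x^a y^b − μ x^c y^d. -/
def IsBinomialPoly {k : Type*} [Field k] (f : MvPolynomial (Fin 2) k) : Prop :=
  ∃ (lam mu : k) (a b c d : ℕ),
    f = MvPolynomial.C lam * X 0 ^ a * X 1 ^ b - MvPolynomial.C mu * X 0 ^ c * X 1 ^ d

/-- An ideal is binomial if it can be generated by binomials. -/
def IsBinomialIdeal {k : Type*} [Field k] (J : Ideal (MvPolynomial (Fin 2) k)) : Prop :=
  ∃ S : Set (MvPolynomial (Fin 2) k), (∀ f ∈ S, IsBinomialPoly f) ∧ J = Ideal.span S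

/-- An ideal is irreducible if it is not the intersection of two strictly larger ideals. -/
def IsIrreducibleIdeal {k : Type*} [Field k] (J : Ideal (MvPolynomial (Fin 2) k)) : Prop :=
  ∀ A B : Ideal (MvPolynomial (Fin 2) k), J = A ⊓ B → J = A ∨ J = B

/-!
Modulo `I` the standard monomials are `1, x, y, x², xy, y², x²y ≡ xy²`, and the socle of
`k[x,y]/I` is spanned by `x²y` and `x² - xy + y²`. Hence `I = (I + (x² - xy + y²)) ∩ (x, y)³` is
reducible, and in `I = I₁ ∩ I₂` with `I₁`, `I₂` irreducible both ideals strictly contain `I`.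
A binomial ideal `J ⊋ I` contains `x²y`: otherwise every binomial of `J` lies in `I`, since
multiplying a binomial by a suitable monomial sends exactly one of its terms into `I` (unless its
two terms agree modulo `I`), leaving a nonzero multiple of a standard monomial, hence `x²y`, in
`J`. So `x²y ∈ I₁ ∩ I₂ = I`, which is false.
-/

open Finsupp

namespace BinomialCounterexample

variable {k : Type*} [Field k]

variable (k) in
noncomputable def I : Ideal (MvPolynomial (Fin 2) k) :=
  Ideal.span {X 0 ^ 2 * X 1 - X 0 * X 1 ^ 2, X 0 ^ 3, X 1 ^ 3}

/-- The exponents `(a, b)` with `x^a y^b ∈ I`. -/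
abbrev OutsideStaircase (a b : ℕ) : Prop := 3 ≤ a ∨ 3 ≤ b ∨ 2 ≤ a ∧ 2 ≤ b

theorem not_outsideStaircase_iff {a b : ℕ} :
    ¬OutsideStaircase a b ↔ a ≤ 2 ∧ b ≤ 1 ∨ a ≤ 1 ∧ b ≤ 2 := by
  omega

set_option synthInstance.maxSize 100000 in
theorem exists_shift_separating {a b c d : ℕ} (hab : ¬OutsideStaircase a b)
    (hcd : ¬OutsideStaircase c d) :
    (∃ i j, ¬(OutsideStaircase (a + i) (b + j) ↔ OutsideStaircase (c + i) (d + j))) ∨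
      (a = c ∧ b = d) ∨ (a + b = 3 ∧ c + d = 3) := by
  have finite_check : ∀ a < 3, ∀ b < 3, ∀ c < 3, ∀ d < 3,
      ¬OutsideStaircase a b → ¬OutsideStaircase c d →
      (∃ i < 3, ∃ j < 3,
        ¬(OutsideStaircase (a + i) (b + j) ↔ OutsideStaircase (c + i) (d + j))) ∨
      (a = c ∧ b = d) ∨ (a + b = 3 ∧ c + d = 3) := by
    decide
  rcases finite_check a (by omega) b (by omega) c (by omega) d (by omega) hab hcd with
    ⟨i, -, j, -, h⟩ | h
  · exact Or.inl ⟨i, j, h⟩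
  · exact Or.inr h

theorem X_sq_mul_X_sub_X_mul_X_sq_mem_I :
    (X 0 ^ 2 * X 1 - X 0 * X 1 ^ 2 : MvPolynomial (Fin 2) k) ∈ I k :=
  Ideal.subset_span (by simp)

theorem C_mul_X_pow_mul_X_pow_mem_I (c : k) {a b : ℕ} (h : OutsideStaircase a b) :
    C c * X 0 ^ a * X 1 ^ b ∈ I k := by
  have hx3 : (X 0 ^ 3 : MvPolynomial (Fin 2) k) ∈ I k := Ideal.subset_span (by simp)
  have hy3 : (X 1 ^ 3 : MvPolynomial (Fin 2) k) ∈ I k := Ideal.subset_span (by simp)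
  rcases h with ha | hb | ⟨ha, hb⟩
  · obtain ⟨a, rfl⟩ := Nat.exists_eq_add_of_le' ha
    convert (I k).mul_mem_left (C c * X 0 ^ a * X 1 ^ b) hx3 using 1
    ring
  · obtain ⟨b, rfl⟩ := Nat.exists_eq_add_of_le' hb
    convert (I k).mul_mem_left (C c * X 0 ^ a * X 1 ^ b) hy3 using 1
    ring
  · obtain ⟨a, rfl⟩ := Nat.exists_eq_add_of_le' ha
    obtain ⟨b, rfl⟩ := Nat.exists_eq_add_of_le' hb
    convert add_mem
      ((I k).mul_mem_left (C c * X 0 ^ a * X 1 ^ (b + 1)) X_sq_mul_X_sub_X_mul_X_sq_mem_I)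
      ((I k).mul_mem_left (C c * X 0 ^ (a + 1) * X 1 ^ b) hy3) using 1
    ring

theorem X_pow_mul_X_pow_sub_X_pow_mul_X_pow_mem_I {a b c d : ℕ} (hab : ¬OutsideStaircase a b)
    (hcd : ¬OutsideStaircase c d) (h : a = c ∧ b = d ∨ a + b = 3 ∧ c + d = 3) :
    (X 0 ^ a * X 1 ^ b - X 0 ^ c * X 1 ^ d : MvPolynomial (Fin 2) k) ∈ I k := by
  rcases h with ⟨rfl, rfl⟩ | ⟨hab3, hcd3⟩
  · rw [sub_self]
    exact zero_mem _
  rcases (by omega : a = 2 ∧ b = 1 ∨ a = 1 ∧ b = 2) with ⟨rfl, rfl⟩ | ⟨rfl, rfl⟩ <;>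
  rcases (by omega : c = 2 ∧ d = 1 ∨ c = 1 ∧ d = 2) with ⟨rfl, rfl⟩ | ⟨rfl, rfl⟩
  all_goals first
    | (rw [sub_self]; exact zero_mem _)
    | simpa using X_sq_mul_X_sub_X_mul_X_sq_mem_I
    | simpa using neg_mem X_sq_mul_X_sub_X_mul_X_sq_mem_I

theorem X_eq_monomial_single {σ R : Type*} [CommSemiring R] (i : σ) :
    (X i : MvPolynomial σ R) = monomial (single i 1) 1 :=
  rfl

theorem coeff_add_coeff_eq_zero_of_mem_I {f : MvPolynomial (Fin 2) k} (hf : f ∈ I k) :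
    coeff (single 0 2 + single 1 1) f + coeff (single 0 1 + single 1 2) f = 0 := by
  simp only [I, Ideal.mem_span_insert, Ideal.mem_span_singleton'] at hf
  obtain ⟨p, _, ⟨q, _, ⟨r, rfl⟩, rfl⟩, rfl⟩ := hf
  simp only [X_eq_monomial_single, monomial_pow, monomial_mul, mul_sub, coeff_add, coeff_sub,
    coeff_mul_monomial']
  simp [Finsupp.le_def, Fin.forall_fin_two]

theorem X_sq_mul_X_not_mem_I : (X 0 ^ 2 * X 1 : MvPolynomial (Fin 2) k) ∉ I k := by
  intro h
  simpa [X_eq_monomial_single, monomial_pow, monomial_mul, coeff_monomial, Finsupp.ext_iff,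
    Fin.forall_fin_two] using coeff_add_coeff_eq_zero_of_mem_I h

theorem X_pow_mul_X_pow_mem_of_C_mul_mem {J : Ideal (MvPolynomial (Fin 2) k)} {c : k}
    {a b a' b' : ℕ} (hc : c ≠ 0) (h : C c * X 0 ^ a * X 1 ^ b ∈ J) (ha : a ≤ a') (hb : b ≤ b') :
    X 0 ^ a' * X 1 ^ b' ∈ J := by
  obtain ⟨i, rfl⟩ := Nat.exists_eq_add_of_le ha
  obtain ⟨j, rfl⟩ := Nat.exists_eq_add_of_le hb
  have hcinv : C c⁻¹ * C c = (1 : MvPolynomial (Fin 2) k) := by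
    rw [← C_mul, inv_mul_cancel₀ hc, C_1]
  convert J.mul_mem_left (C c⁻¹ * X 0 ^ i * X 1 ^ j) h using 1
  linear_combination (-(X 0 ^ (a + i) * X 1 ^ (b + j) : MvPolynomial (Fin 2) k)) * hcinv

theorem coeff_eq_zero_of_C_mul_mem {J : Ideal (MvPolynomial (Fin 2) k)} (hIJ : I k ≤ J)
    (hJ : X 0 ^ 2 * X 1 ∉ J) {c : k} {a b : ℕ} (hab : ¬OutsideStaircase a b)
    (h : C c * X 0 ^ a * X 1 ^ b ∈ J) : c = 0 := by
  by_contra hc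
  apply hJ
  rcases not_outsideStaircase_iff.1 hab with ⟨ha, hb⟩ | ⟨ha, hb⟩
  · simpa using X_pow_mul_X_pow_mem_of_C_mul_mem (a' := 2) (b' := 1) hc h ha hb
  · convert add_mem (hIJ X_sq_mul_X_sub_X_mul_X_sq_mem_I)
      (X_pow_mul_X_pow_mem_of_C_mul_mem (a' := 1) (b' := 2) hc h ha hb) using 1
    ring

theorem C_mul_mem_I_of_mem {J : Ideal (MvPolynomial (Fin 2) k)} (hIJ : I k ≤ J)
    (hJ : X 0 ^ 2 * X 1 ∉ J) {c : k} {a b : ℕ} (h : C c * X 0 ^ a * X 1 ^ b ∈ J) :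
    C c * X 0 ^ a * X 1 ^ b ∈ I k := by
  by_cases hab : OutsideStaircase a b
  · exact C_mul_X_pow_mul_X_pow_mem_I c hab
  · rw [coeff_eq_zero_of_C_mul_mem hIJ hJ hab h, C_0, zero_mul, zero_mul]
    exact zero_mem _

theorem eq_zero_or_eq_zero_of_shift_separates {J : Ideal (MvPolynomial (Fin 2) k)} (hIJ : I k ≤ J)
    (hJ : X 0 ^ 2 * X 1 ∉ J) {l m : k} {a b c d i j : ℕ}
    (hsep : ¬(OutsideStaircase (a + i) (b + j) ↔ OutsideStaircase (c + i) (d + j)))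
    (hf : C l * X 0 ^ a * X 1 ^ b - C m * X 0 ^ c * X 1 ^ d ∈ J) : l = 0 ∨ m = 0 := by
  have hshift := J.mul_mem_left (X 0 ^ i * X 1 ^ j) hf
  by_cases hout : OutsideStaircase (a + i) (b + j)
  · refine Or.inr (coeff_eq_zero_of_C_mul_mem hIJ hJ (fun h => hsep (iff_of_true hout h)) ?_)
    convert sub_mem (hIJ (C_mul_X_pow_mul_X_pow_mem_I l hout)) hshift using 1
    ring
  · refine Or.inl (coeff_eq_zero_of_C_mul_mem hIJ hJ hout ?_)
    have hout' : OutsideStaircase (c + i) (d + j) := by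
      by_contra h
      exact hsep (iff_of_false hout h)
    convert add_mem hshift (hIJ (C_mul_X_pow_mul_X_pow_mem_I m hout')) using 1
    ring

theorem mem_I_of_isBinomialPoly {J : Ideal (MvPolynomial (Fin 2) k)} (hIJ : I k ≤ J)
    (hJ : X 0 ^ 2 * X 1 ∉ J) {f : MvPolynomial (Fin 2) k} (hf : IsBinomialPoly f)
    (hfJ : f ∈ J) : f ∈ I k := by
  obtain ⟨l, m, a, b, c, d, rfl⟩ := hf
  have of_left (h : C l * X 0 ^ a * X 1 ^ b ∈ J) : _ ∈ I k :=
    sub_mem (C_mul_mem_I_of_mem hIJ hJ h)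
      (C_mul_mem_I_of_mem hIJ hJ (by simpa using sub_mem h hfJ))
  have of_right (h : C m * X 0 ^ c * X 1 ^ d ∈ J) : _ ∈ I k :=
    sub_mem (C_mul_mem_I_of_mem hIJ hJ (by simpa using add_mem hfJ h))
      (C_mul_mem_I_of_mem hIJ hJ h)
  by_cases hab : OutsideStaircase a b
  · exact of_left (hIJ (C_mul_X_pow_mul_X_pow_mem_I l hab))
  by_cases hcd : OutsideStaircase c d
  · exact of_right (hIJ (C_mul_X_pow_mul_X_pow_mem_I m hcd))
  rcases exists_shift_separating hab hcd with ⟨i, j, hsep⟩ | hclose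
  · rcases eq_zero_or_eq_zero_of_shift_separates hIJ hJ hsep hfJ with rfl | rfl
    · exact of_right (by simpa using neg_mem hfJ)
    · exact of_left (by simpa using hfJ)
  · have hsub := X_pow_mul_X_pow_sub_X_pow_mul_X_pow_mem_I (k := k) hab hcd hclose
    have hrest : C (l - m) * X 0 ^ c * X 1 ^ d ∈ J := by
      convert sub_mem hfJ (hIJ ((I k).mul_mem_left (C l) hsub)) using 1
      rw [C_sub]; ring
    convert add_mem ((I k).mul_mem_left (C l) hsub) (C_mul_mem_I_of_mem hIJ hJ hrest) using 1
    rw [C_sub]; ring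

theorem X_sq_mul_X_mem_of_isBinomialIdeal {J : Ideal (MvPolynomial (Fin 2) k)}
    (hJ : IsBinomialIdeal J) (hIJ : I k < J) : X 0 ^ 2 * X 1 ∈ J := by
  by_contra hx
  obtain ⟨S, hS, rfl⟩ := hJ
  refine hIJ.not_ge (Ideal.span_le.2 fun f hf => ?_)
  exact mem_I_of_isBinomialPoly hIJ.le hx (hS f hf) (Ideal.subset_span hf)

theorem X_pow_mul_X_pow_mem_idealOfVars_pow (a b : ℕ) :
    (X 0 ^ a * X 1 ^ b : MvPolynomial (Fin 2) k) ∈ idealOfVars (Fin 2) k ^ (a + b) := by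
  rw [pow_add]
  exact Ideal.mul_mem_mul (Ideal.pow_mem_pow (Ideal.subset_span (Set.mem_range_self 0)) a)
    (Ideal.pow_mem_pow (Ideal.subset_span (Set.mem_range_self 1)) b)

theorem I_le_idealOfVars_pow_three : I k ≤ idealOfVars (Fin 2) k ^ 3 := by
  rw [I, Ideal.span_le]
  rintro f (rfl | rfl | rfl)
  · exact sub_mem (by simpa using X_pow_mul_X_pow_mem_idealOfVars_pow 2 1)
      (by simpa using X_pow_mul_X_pow_mem_idealOfVars_pow 1 2)
  · simpa using X_pow_mul_X_pow_mem_idealOfVars_pow (k := k) 3 0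
  · simpa using X_pow_mul_X_pow_mem_idealOfVars_pow (k := k) 0 3

theorem sub_C_coeff_zero_mem_idealOfVars {σ R : Type*} [CommRing R] (p : MvPolynomial σ R) :
    p - C (coeff 0 p) ∈ idealOfVars σ R := by
  rw [← pow_one (idealOfVars σ R), mem_pow_idealOfVars_iff']
  intro x hx
  obtain rfl : x = 0 := by simpa [Finsupp.degree_eq_zero_iff] using hx
  simp

theorem idealOfVars_le_colon :
    idealOfVars (Fin 2) k ≤ (I k).colon {X 0 ^ 2 - X 0 * X 1 + X 1 ^ 2} := by
  simp only [Ideal.span_le, Set.range_subset_iff, Fin.forall_fin_two, SetLike.mem_coe,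
    Submodule.mem_colon_singleton, smul_eq_mul]
  constructor
  · convert sub_mem (C_mul_X_pow_mul_X_pow_mem_I 1 (a := 3) (b := 0) (by decide))
      (X_sq_mul_X_sub_X_mul_X_sq_mem_I (k := k)) using 1
    rw [C_1]; ring
  · convert add_mem (X_sq_mul_X_sub_X_mul_X_sq_mem_I (k := k))
      (C_mul_X_pow_mul_X_pow_mem_I 1 (a := 0) (b := 3) (by decide)) using 1
    rw [C_1]; ring

theorem eq_zero_of_C_mul_mem_idealOfVars_pow_three {c : k}
    (h : C c * (X 0 ^ 2 - X 0 * X 1 + X 1 ^ 2) ∈ idealOfVars (Fin 2) k ^ 3) : c = 0 := by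
  rw [mem_pow_idealOfVars_iff'] at h
  simpa [coeff_X_pow, coeff_X_mul', coeff_X, ← Finsupp.single_tsub,
    Finsupp.single_eq_single_iff] using h (single 0 2) (by simp)

theorem I_eq_sup_span_inf_idealOfVars_pow_three : I k =
    (I k ⊔ Ideal.span {X 0 ^ 2 - X 0 * X 1 + X 1 ^ 2}) ⊓ idealOfVars (Fin 2) k ^ 3 := by
  refine le_antisymm (le_inf le_sup_left I_le_idealOfVars_pow_three) ?_
  rintro f ⟨hfA, hfB⟩
  obtain ⟨i, hi, _, hv, rfl⟩ := Submodule.mem_sup.1 hfA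
  obtain ⟨p, rfl⟩ := Ideal.mem_span_singleton'.1 hv
  have hrest : (p - C (coeff 0 p)) * (X 0 ^ 2 - X 0 * X 1 + X 1 ^ 2) ∈ I k := by
    simpa using idealOfVars_le_colon (sub_C_coeff_zero_mem_idealOfVars p)
  have hc : coeff 0 p = 0 := by
    refine eq_zero_of_C_mul_mem_idealOfVars_pow_three ?_
    convert sub_mem hfB (I_le_idealOfVars_pow_three (add_mem hi hrest)) using 1
    ring
  convert add_mem hi hrest using 1
  rw [hc, C_0, sub_zero]

theorem not_isIrreducibleIdeal_I : ¬IsIrreducibleIdeal (I k) := by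
  intro hirr
  rcases hirr _ _ I_eq_sup_span_inf_idealOfVars_pow_three with h | h
  · have hv : X 0 ^ 2 - X 0 * X 1 + X 1 ^ 2 ∈ I k :=
      h ▸ Submodule.mem_sup_right (Ideal.mem_span_singleton_self _)
    exact one_ne_zero (eq_zero_of_C_mul_mem_idealOfVars_pow_three (k := k)
      (by simpa using I_le_idealOfVars_pow_three hv))
  · apply X_sq_mul_X_not_mem_I (k := k)
    rw [h]
    simpa using X_pow_mul_X_pow_mem_idealOfVars_pow (k := k) 2 1

end BinomialCounterexample

open BinomialCounterexample in
theorem stmt11 (k : Type*) [Field k] :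
    let x : MvPolynomial (Fin 2) k := X 0
    let y : MvPolynomial (Fin 2) k := X 1
    let I : Ideal (MvPolynomial (Fin 2) k) :=
      Ideal.span {x ^ 2 * y - x * y ^ 2, x ^ 3, y ^ 3}
    ¬ ∃ I₁ I₂ : Ideal (MvPolynomial (Fin 2) k),
        IsBinomialIdeal I₁ ∧ IsBinomialIdeal I₂ ∧
        IsIrreducibleIdeal I₁ ∧ IsIrreducibleIdeal I₂ ∧ I = I₁ ⊓ I₂ := by
  rintro _ _ _ ⟨J₁, J₂, hb₁, hb₂, hi₁, hi₂, hI⟩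
  change I k = J₁ ⊓ J₂ at hI
  have mem_of_le {J} (hb : IsBinomialIdeal J) (hi : IsIrreducibleIdeal J) (hle : I k ≤ J) :
      X 0 ^ 2 * X 1 ∈ J :=
    X_sq_mul_X_mem_of_isBinomialIdeal hb
      (hle.lt_of_ne fun h => not_isIrreducibleIdeal_I (h ▸ hi))
  apply X_sq_mul_X_not_mem_I (k := k)
  rw [hI]
  exact ⟨mem_of_le hb₁ hi₁ (hI ▸ inf_le_left), mem_of_le hb₂ hi₂ (hI ▸ inf_le_right)⟩
end

section
/- Let R be a commutative ring, M an R-module, N ⊆ M an essential submodule, and S ⊆ R a multiplicative set. Then the localization S⁻¹N is an essential S⁻¹R-submodule of S⁻¹M, provided R is Noetherian and M is finitely generated. -/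
/-- A submodule N of M is essential if it meets every nonzero submodule nontrivially. -/
def IsEssentialSubmodule {R M : Type*} [CommRing R] [AddCommGroup M] [Module R M]
    (N : Submodule R M) : Prop :=
  ∀ P : Submodule R M, P ≠ ⊥ → N ⊓ P ≠ ⊥

/-!
An element `x` of `M` dies in `S⁻¹M` iff `s • x = 0` for some `s ∈ S`. When `M` is Noetherian the
kernel `K` of `M → S⁻¹M` is finitely generated, so one `t ∈ S` kills all of `K`; moreover
`t • x ∈ K` forces `x ∈ K`. A nonzero submodule `P` of `S⁻¹M` is the localization of its preimage
`Q`, and `Q ⊄ K`. Then `t • Q` is nonzero and meets `K` trivially, so the nonzero submodule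
`N ⊓ t • Q` of `N ⊓ Q` is not inside `K`, and `S⁻¹(N ⊓ Q) = S⁻¹N ⊓ P` is nonzero.
-/

open Submodule

theorem Submodule.FG.exists_forall_smul_eq_zero {R M : Type*} [CommSemiring R]
    [AddCommMonoid M] [Module R M] {K : Submodule R M} (hK : K.FG) (S : Submonoid R)
    (htors : ∀ x ∈ K, ∃ s : S, s • x = 0) : ∃ t : S, ∀ x ∈ K, t • x = 0 := by
  classical
  obtain ⟨s, rfl⟩ := hK
  choose u hu using fun x : s => htors x (subset_span x.2)
  refine ⟨∏ x ∈ s.attach, u x, fun x hx => ?_⟩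
  have hann : ((∏ x ∈ s.attach, u x : S) : R) ∈ (span R (s : Set M)).annihilator := by
    rw [mem_annihilator_span]
    intro x
    rw [Submonoid.coe_finsetProd, ← Finset.prod_erase_mul _ _ (Finset.mem_attach s x), mul_smul,
      ← Submonoid.smul_def, hu, smul_zero]
  exact mem_annihilator.mp hann x hx

theorem IsEssentialSubmodule.not_inf_le {R M : Type*} [CommRing R] [AddCommGroup M] [Module R M]
    {N Q K : Submodule R M} (hN : IsEssentialSubmodule N) (t : R) (htK : ∀ x ∈ K, t • x = 0)
    (hsat : ∀ x, t • x ∈ K → x ∈ K) (hQK : ¬ Q ≤ K) : ¬ N ⊓ Q ≤ K := by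
  intro hNQ
  set Q' := Q.map (LinearMap.lsmul R M t)
  have hQ'Q : Q' ≤ Q := map_le_iff_le_comap.mpr fun q hq => Q.smul_mem t hq
  have hQ'K : Q' ⊓ K = ⊥ := by
    rw [eq_bot_iff]
    rintro _ ⟨⟨q, -, rfl⟩, hqK⟩
    exact htK q (hsat q hqK)
  obtain ⟨q, hqQ, hqK⟩ := SetLike.not_le_iff_exists.mp hQK
  have hQ' : Q' ≠ ⊥ := (Submodule.ne_bot_iff Q').mpr
    ⟨t • q, mem_map_of_mem hqQ, fun h => hqK (hsat q (h ▸ K.zero_mem))⟩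
  apply hN Q' hQ'
  rw [eq_bot_iff, ← hQ'K]
  exact le_inf inf_le_right ((inf_le_inf_left N hQ'Q).trans hNQ)

section Localization

variable {R M Rₛ Mₛ : Type*} [CommRing R] [AddCommGroup M] [Module R M]
  [CommRing Rₛ] [Algebra R Rₛ] [AddCommGroup Mₛ] [Module R Mₛ] [Module Rₛ Mₛ]
  [IsScalarTower R Rₛ Mₛ] (S : Submonoid R) [IsLocalization S Rₛ]
  (f : M →ₗ[R] Mₛ) [IsLocalizedModule S f]

theorem IsLocalizedModule.exists_smul_eq_zero_of_mem_ker [IsNoetherian R M] :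
    ∃ t : S, ∀ x ∈ LinearMap.ker f, t • x = 0 :=
  (IsNoetherian.noetherian _).exists_forall_smul_eq_zero S
    fun _ hx => (IsLocalizedModule.eq_zero_iff S f).mp hx

theorem IsLocalizedModule.mem_ker_of_smul_mem_ker (t : S) {x : M}
    (hx : t • x ∈ LinearMap.ker f) : x ∈ LinearMap.ker f := by
  obtain ⟨s, hs⟩ := (IsLocalizedModule.eq_zero_iff S f).mp hx
  exact (IsLocalizedModule.eq_zero_iff S f).mpr ⟨s * t, by rw [mul_smul, hs]⟩

theorem Submodule.localized'_eq_bot_iff (Q : Submodule R M) :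
    Q.localized' Rₛ S f = ⊥ ↔ Q ≤ LinearMap.ker f := by
  rw [← le_bot_iff, (localized'gi Rₛ S f).gc Q ⊥]
  simp only [restrictScalars_bot, comap_bot]

theorem IsEssentialSubmodule.localized' [IsNoetherian R M] {N : Submodule R M}
    (hN : IsEssentialSubmodule N) : IsEssentialSubmodule (N.localized' Rₛ S f) := by
  obtain ⟨t, ht⟩ := IsLocalizedModule.exists_smul_eq_zero_of_mem_ker S f
  intro P hP
  set Q := comap f (P.restrictScalars R)
  have hQP : Q.localized' Rₛ S f = P := (localized'gi Rₛ S f).l_u_eq P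
  have hQ : ¬ Q ≤ LinearMap.ker f := by rwa [← localized'_eq_bot_iff (Rₛ := Rₛ) S f, hQP]
  rw [← hQP, ← localized'_inf, Ne, localized'_eq_bot_iff]
  exact hN.not_inf_le t ht (fun _ => IsLocalizedModule.mem_ker_of_smul_mem_ker S f t) hQ

end Localization

theorem stmt14 (R M : Type*) [CommRing R] [IsNoetherianRing R]
    [AddCommGroup M] [Module R M] [Module.Finite R M]
    (S : Submonoid R) (N : Submodule R M) (hN : IsEssentialSubmodule N) :
    IsEssentialSubmodule (N.localized S) :=
  hN.localized' S (LocalizedModule.mkLinearMap S M)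
end
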